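/- Assume P̃_O(o) > 0 for all o and P̃_S(s|o) > 0 for all (o,s). Then the single-step expected free energy satisfies the identity ∑_{s : Q(s)>0} ∑_o Q(s)·P(o|s)·(log Q(s) − log(P̃_O(o)·P̃_S(s|o))) = −∑_o Q(o)·log P̃_O(o) + ∑_{o : Q(o)>0} Q(o)·KL(Q(·|o) ‖ P̃_S(·|o)) − ∑_{o : Q(o)>0} Q(o)·KL(Q(·|o) ‖ Q); in particular it is bounded below by the pragmatic-epistemic decomposition: ∑_{s : Q(s)>0} ∑_o Q(s)·P(o|s)·(log Q(s) − log(P̃_O(o)·P̃_S(s|o))) ≥ −∑_o Q(o)·log P̃_O(o) − ∑_{o : Q(o)>0} Q(o)·KL(Q(·|o) ‖ Q). -/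

import Mathlib

/-!
Split `log (P̃_O(o) P̃_S(s|o))` into its two factors. Summed against the joint weight
`P(o|s) Q(s) = Q(o) Q(s|o)`, the first factor gives the pragmatic term, and the second one,
together with `log Q(s)`, gives `Q(o) (KL(Q(·|o) ‖ P̃_S(·|o)) - KL(Q(·|o) ‖ Q))`: the `log Q(s|o)`
parts of the two divergences cancel. The bound is Gibbs' inequality for the first divergence.
-/

/-- A belief over a finite set: nonnegative and sums to one. -/
def IsBelief {X : Type*} [Fintype X] (p : X → ℝ) : Prop :=
  (∀ x, 0 ≤ p x) ∧ ∑ x, p x = 1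

/-- KL divergence between two distributions on a finite set. -/
noncomputable def KL {X : Type*} [Fintype X] (p q : X → ℝ) : ℝ :=
  ∑ x, if 0 < p x then p x * Real.log (p x / q x) else 0

open Real Finset

theorem ite_pos_eq_self {a x : ℝ} (ha : 0 ≤ a) (hx : a = 0 → x = 0) :
    (if 0 < a then x else 0) = x := by
  split_ifs with h
  · rfl
  · exact (hx (le_antisymm (not_lt.mp h) ha)).symm

theorem sub_le_mul_log_div {p q : ℝ} (hp : 0 < p) (hq : 0 < q) : p - q ≤ p * log (p / q) := by
  have h := one_sub_inv_le_log_of_pos (div_pos hp hq)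
  rw [inv_div] at h
  calc p - q = p * (1 - q / p) := by field_simp
    _ ≤ p * log (p / q) := mul_le_mul_of_nonneg_left h hp.le

section KL

variable {X : Type*} [Fintype X] {p q r : X → ℝ}

theorem KL_nonneg (hp : IsBelief p) (hq : IsBelief q) (hpq : ∀ x, 0 < p x → 0 < q x) :
    0 ≤ KL p q :=
  calc (0 : ℝ) = ∑ x, p x - ∑ x, q x := by rw [hp.2, hq.2, sub_self]
    _ = ∑ x, (p x - q x) := (sum_sub_distrib _ _).symm
    _ ≤ KL p q := sum_le_sum fun x _ => by
      split_ifs with h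
      · exact sub_le_mul_log_div h (hpq x h)
      · linarith [hp.1 x, hq.1 x]

theorem KL_sub_KL (hp : ∀ x, 0 ≤ p x) (hq : ∀ x, 0 < p x → 0 < q x)
    (hr : ∀ x, 0 < p x → 0 < r x) :
    KL p q - KL p r = ∑ x, p x * (log (r x) - log (q x)) := by
  rw [KL, KL, ← sum_sub_distrib]
  refine sum_congr rfl fun x _ => ?_
  split_ifs with h
  · rw [log_div h.ne' (hq x h).ne', log_div h.ne' (hr x h).ne']
    ring
  · simp [le_antisymm (not_lt.mp h) (hp x)]

theorem isBelief_div_sum (hp : ∀ x, 0 ≤ p x) (hsum : 0 < ∑ x, p x) :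
    IsBelief fun x => p x / ∑ x', p x' :=
  ⟨fun x => div_nonneg (hp x) hsum.le, by rw [← sum_div, div_self hsum.ne']⟩

theorem sum_mul_KL_div_sum_sub (hp : ∀ x, 0 ≤ p x) (hq : ∀ x, 0 < p x → 0 < q x)
    (hr : ∀ x, 0 < p x → 0 < r x) :
    (∑ x, p x) * KL (fun x => p x / ∑ x', p x') q
        - (∑ x, p x) * KL (fun x => p x / ∑ x', p x') r
      = ∑ x, p x * (log (r x) - log (q x)) := by
  have hpos : ∀ x, 0 < p x / ∑ x', p x' → 0 < p x := fun x h =>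
    (hp x).lt_of_ne' (div_ne_zero_iff.mp h.ne').1
  have hzero : ∀ x, ∑ x', p x' = 0 → p x = 0 := fun x h =>
    (sum_eq_zero_iff_of_nonneg fun x _ => hp x).mp h x (mem_univ x)
  rw [← mul_sub, KL_sub_KL (fun x => div_nonneg (hp x) (sum_nonneg fun x _ => hp x))
    (fun x h => hq x (hpos x h)) (fun x h => hr x (hpos x h)), mul_sum]
  refine sum_congr rfl fun x _ => ?_
  rw [← mul_assoc, mul_div_cancel_of_imp' (hzero x)]

end KL

section ExpectedFreeEnergy

variable {S O : Type*} [Fintype S] {Q : S → ℝ} {P : S → O → ℝ}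

def marginal (P : S → O → ℝ) (Q : S → ℝ) (o : O) : ℝ :=
  ∑ s, P s o * Q s

noncomputable def posterior (P : S → O → ℝ) (Q : S → ℝ) (o : O) (s : S) : ℝ :=
  P s o * Q s / marginal P Q o

/-- The paper's epistemic term is `expectedKL P Q fun _ => Q`. -/
noncomputable def expectedKL [Fintype O] (P : S → O → ℝ) (Q : S → ℝ) (R : O → S → ℝ) : ℝ :=
  ∑ o, if 0 < marginal P Q o then marginal P Q o * KL (posterior P Q o) (R o) else 0

noncomputable def expectedFreeEnergy [Fintype O] (Q : S → ℝ) (P : S → O → ℝ) (PO : O → ℝ)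
    (PS : O → S → ℝ) : ℝ :=
  ∑ s, if 0 < Q s then ∑ o, Q s * P s o * (log (Q s) - log (PO o * PS o s)) else 0

theorem marginal_nonneg (hP : ∀ s o, 0 ≤ P s o) (hQ : ∀ s, 0 ≤ Q s) (o : O) :
    0 ≤ marginal P Q o :=
  sum_nonneg fun s _ => mul_nonneg (hP s o) (hQ s)

theorem expectedKL_eq_sum [Fintype O] (hP : ∀ s o, 0 ≤ P s o) (hQ : ∀ s, 0 ≤ Q s)
    (R : O → S → ℝ) :
    expectedKL P Q R = ∑ o, marginal P Q o * KL (posterior P Q o) (R o) :=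
  sum_congr rfl fun o _ =>
    ite_pos_eq_self (marginal_nonneg hP hQ o) fun h => by rw [h, zero_mul]

theorem expectedKL_sub_expectedKL [Fintype O] {R R' : O → S → ℝ} (hP : ∀ s o, 0 ≤ P s o)
    (hQ : ∀ s, 0 ≤ Q s) (hR : ∀ o s, 0 < P s o * Q s → 0 < R o s)
    (hR' : ∀ o s, 0 < P s o * Q s → 0 < R' o s) :
    expectedKL P Q R - expectedKL P Q R'
      = ∑ o, ∑ s, P s o * Q s * (log (R' o s) - log (R o s)) := by
  rw [expectedKL_eq_sum hP hQ, expectedKL_eq_sum hP hQ, ← sum_sub_distrib]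
  exact sum_congr rfl fun o _ =>
    sum_mul_KL_div_sum_sub (fun s => mul_nonneg (hP s o) (hQ s)) (hR o) (hR' o)

theorem expectedKL_nonneg [Fintype O] {R : O → S → ℝ} (hP : ∀ s o, 0 ≤ P s o)
    (hQ : ∀ s, 0 ≤ Q s) (hR : ∀ o, IsBelief (R o)) (hRpos : ∀ o s, 0 < P s o * Q s → 0 < R o s) :
    0 ≤ expectedKL P Q R := by
  refine sum_nonneg fun o _ => ?_
  split_ifs with hm
  · have hpost := isBelief_div_sum (fun s => mul_nonneg (hP s o) (hQ s)) hm
    exact mul_nonneg hm.le <| KL_nonneg hpost (hR o) fun s hs =>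
      hRpos o s ((div_pos_iff_of_pos_right hm).mp hs)
  · exact le_rfl

theorem expectedFreeEnergy_eq [Fintype O] {PO : O → ℝ} {PS : O → S → ℝ} (hQ : ∀ s, 0 ≤ Q s)
    (hPO : ∀ o, 0 < PO o) (hPS : ∀ o s, 0 < PS o s) :
    expectedFreeEnergy Q P PO PS
      = -∑ o, marginal P Q o * log (PO o)
        + ∑ o, ∑ s, P s o * Q s * (log (Q s) - log (PS o s)) :=
  calc _ = ∑ s, ∑ o, Q s * P s o * (log (Q s) - log (PO o * PS o s)) :=
        sum_congr rfl fun s _ => ite_pos_eq_self (hQ s) fun h => by simp [h]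
    _ = ∑ o, ∑ s, (-(P s o * Q s * log (PO o))
          + P s o * Q s * (log (Q s) - log (PS o s))) := by
        rw [sum_comm]
        refine sum_congr rfl fun o _ => sum_congr rfl fun s _ => ?_
        rw [log_mul (hPO o).ne' (hPS o s).ne']
        ring
    _ = _ := by simp only [sum_add_distrib, sum_neg_distrib, marginal, sum_mul]

end ExpectedFreeEnergy

theorem efe_pragmatic_epistemic_decomposition_general
    {S O : Type*} [Fintype S] [Fintype O]
    (Q : S → ℝ) (hQ : IsBelief Q)
    (P : S → O → ℝ) (hP : ∀ s, IsBelief (P s))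
    (PO : O → ℝ) (hPOpos : ∀ o, 0 < PO o)
    (PS : O → S → ℝ) (hPS : ∀ o, IsBelief (PS o)) (hPSpos : ∀ o s, 0 < PS o s) :
    ((∑ s, if 0 < Q s then
        ∑ o, Q s * P s o * (Real.log (Q s) - Real.log (PO o * PS o s)) else 0)
      = -(∑ o, (∑ s, P s o * Q s) * Real.log (PO o))
        + (∑ o, if 0 < (∑ s, P s o * Q s) then
            (∑ s, P s o * Q s) *
              KL (fun s => P s o * Q s / (∑ s', P s' o * Q s')) (PS o) else 0)
        - (∑ o, if 0 < (∑ s, P s o * Q s) then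
            (∑ s, P s o * Q s) *
              KL (fun s => P s o * Q s / (∑ s', P s' o * Q s')) Q else 0))
    ∧ ((∑ s, if 0 < Q s then
        ∑ o, Q s * P s o * (Real.log (Q s) - Real.log (PO o * PS o s)) else 0)
      ≥ -(∑ o, (∑ s, P s o * Q s) * Real.log (PO o))
        - (∑ o, if 0 < (∑ s, P s o * Q s) then
            (∑ s, P s o * Q s) *
              KL (fun s => P s o * Q s / (∑ s', P s' o * Q s')) Q else 0)) := by
  obtain ⟨hQ0, -⟩ := hQ
  have hP0 : ∀ s o, 0 ≤ P s o := fun s => (hP s).1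
  have hPS_abs : ∀ o s, 0 < P s o * Q s → 0 < PS o s := fun o s _ => hPSpos o s
  have hQ_abs : ∀ o s, 0 < P s o * Q s → 0 < Q s := fun _ s h => pos_of_mul_pos_right h (hP0 s _)
  have hdecomp : expectedFreeEnergy Q P PO PS
      = -∑ o, marginal P Q o * log (PO o) + expectedKL P Q PS - expectedKL P Q fun _ => Q := by
    rw [add_sub_assoc, expectedKL_sub_expectedKL hP0 hQ0 hPS_abs hQ_abs,
      expectedFreeEnergy_eq hQ0 hPOpos hPSpos]
  refine ⟨hdecomp, ?_⟩
  show expectedFreeEnergy Q P PO PS ≥ -∑ o, marginal P Q o * log (PO o) - expectedKL P Q fun _ => Q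
  linarith [expectedKL_nonneg hP0 hQ0 hPS hPS_abs]

/-- Single-step expected free energy identity and its pragmatic-epistemic
lower bound (appendix of the paper). -/
theorem efe_pragmatic_epistemic_decomposition
    {S O : Type*} [Fintype S] [Fintype O]
    (Q : S → ℝ) (hQ : IsBelief Q)
    (P : S → O → ℝ) (hP : ∀ s, IsBelief (P s))
    (PO : O → ℝ) (hPO : IsBelief PO) (hPOpos : ∀ o, 0 < PO o)
    (PS : O → S → ℝ) (hPS : ∀ o, IsBelief (PS o)) (hPSpos : ∀ o s, 0 < PS o s) :
    ((∑ s, if 0 < Q s then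
        ∑ o, Q s * P s o * (Real.log (Q s) - Real.log (PO o * PS o s)) else 0)
      = -(∑ o, (∑ s, P s o * Q s) * Real.log (PO o))
        + (∑ o, if 0 < (∑ s, P s o * Q s) then
            (∑ s, P s o * Q s) *
              KL (fun s => P s o * Q s / (∑ s', P s' o * Q s')) (PS o) else 0)
        - (∑ o, if 0 < (∑ s, P s o * Q s) then
            (∑ s, P s o * Q s) *
              KL (fun s => P s o * Q s / (∑ s', P s' o * Q s')) Q else 0))
    ∧ ((∑ s, if 0 < Q s then
        ∑ o, Q s * P s o * (Real.log (Q s) - Real.log (PO o * PS o s)) else 0)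
      ≥ -(∑ o, (∑ s, P s o * Q s) * Real.log (PO o))
        - (∑ o, if 0 < (∑ s, P s o * Q s) then
            (∑ s, P s o * Q s) *
              KL (fun s => P s o * Q s / (∑ s', P s' o * Q s')) Q else 0)) :=
  efe_pragmatic_epistemic_decomposition_general Q hQ P hP PO hPOpos PS hPS hPSpos
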